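/- Let ψ : ℕ → ℝ be a nonnegative sequence with Σ_{k=1}^∞ k·ψ(k) < ∞, let β ∈ ℝ and n ∈ ℕ (n ≥ 1). Then Σ_{k=n}^∞ ψ(k) − (π/n)·Σ_{k=1}^∞ k·ψ(k+n) ≤ inf_{λ∈ℝ} sup_{t∈ℝ} |Ψ_{β,n}(t) − λ| ≤ Σ_{k=n}^∞ ψ(k). -/

import Mathlib

open MeasureTheory Real Filter

noncomputable section

/-- The kernel `Ψ_{β,n}(t) = Σ_{k=n}^∞ ψ(k) cos(k t - βπ/2)`. -/
def PsiKerN (ψ : ℕ → ℝ) (β : ℝ) (n : ℕ) (t : ℝ) : ℝ :=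
  ∑' k : ℕ, ψ (k + n) * Real.cos (((k + n : ℕ) : ℝ) * t - β * π / 2)

/-!
The upper bound takes `λ = 0` and `|Ψ_{β,n}| ≤ Σ_{k≥n} ψ(k)`. For the lower bound, pick `t₀, t₁`
with `|tᵢ| ≤ π/n` such that `n t₀ - βπ/2 ≡ 0` and `n t₁ - βπ/2 ≡ π (mod 2π)`. Then
`Ψ_{β,n}(t₀) = Σ_k ψ(k+n) cos(k t₀)` and `Ψ_{β,n}(t₁) = -Σ_k ψ(k+n) cos(k t₁)`, and
`cos x ≥ 1 - |x|` bounds both sums below by `Σ_k ψ(k+n) - (π/n) Σ_k k ψ(k+n)`. Any constant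
`λ` is at distance at least half the gap `Ψ_{β,n}(t₀) - Ψ_{β,n}(t₁)` from one of the two values.
-/

section Oscillation

variable {α : Type*} {f : α → ℝ} {M : ℝ}

lemma bddAbove_range_abs_sub_of_abs_le (hM : ∀ t, |f t| ≤ M) (lam : ℝ) :
    BddAbove (Set.range fun t => |f t - lam|) :=
  ⟨M + |lam|, by
    rintro _ ⟨t, rfl⟩
    exact (abs_sub _ _).trans (by linarith [hM t])⟩

lemma ciInf_ciSup_abs_sub_le_of_abs_le [Nonempty α] (hM : ∀ t, |f t| ≤ M) :
    ⨅ lam : ℝ, ⨆ t, |f t - lam| ≤ M := by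
  have hbdd : BddBelow (Set.range fun lam : ℝ => ⨆ t, |f t - lam|) :=
    ⟨0, by
      rintro _ ⟨lam, rfl⟩
      exact Real.iSup_nonneg fun t => abs_nonneg _⟩
  calc ⨅ lam : ℝ, ⨆ t, |f t - lam| ≤ ⨆ t, |f t - 0| := ciInf_le hbdd 0
    _ ≤ M := ciSup_le fun t => by simpa using hM t

lemma sub_div_two_le_ciInf_ciSup_abs_sub (hM : ∀ t, |f t| ≤ M) (a b : α) :
    (f a - f b) / 2 ≤ ⨅ lam : ℝ, ⨆ t, |f t - lam| := by
  refine le_ciInf fun lam => ?_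
  have ha := le_ciSup (bddAbove_range_abs_sub_of_abs_le hM lam) a
  have hb := le_ciSup (bddAbove_range_abs_sub_of_abs_le hM lam) b
  linarith [le_abs_self (f a - lam), neg_le_abs (f b - lam)]

end Oscillation

lemma one_sub_abs_le_cos (x : ℝ) : 1 - |x| ≤ cos x := by
  rcases le_or_gt |x| 2 with hx | hx
  · have hsq : x ^ 2 / 2 ≤ |x| := by nlinarith [sq_abs x, abs_nonneg x]
    linarith [one_sub_sq_div_two_le_cos (x := x)]
  · linarith [neg_one_le_cos x]

lemma exists_abs_le_pi_div_mul_eq_add_int_mul_two_pi {N : ℝ} (hN : 0 < N) (y : ℝ) :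
    ∃ u : ℝ, ∃ r : ℤ, |u| ≤ π / N ∧ N * u = y + r * (2 * π) := by
  set r : ℤ := round (y / (2 * π))
  refine ⟨(y - r * (2 * π)) / N, -r, ?_, by push_cast; field_simp; ring⟩
  have hround : |y / (2 * π) - r| ≤ 1 / 2 := abs_sub_round _
  have hfactor : y - r * (2 * π) = (y / (2 * π) - r) * (2 * π) := by field_simp
  rw [abs_div, abs_of_pos hN, div_le_div_iff_of_pos_right hN, hfactor, abs_mul,
    abs_of_pos (by positivity : (0 : ℝ) < 2 * π)]
  nlinarith [pi_pos]

section CosineSeries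

variable {a : ℕ → ℝ}

lemma summable_mul_cos (ha : Summable a) (θ : ℕ → ℝ) :
    Summable fun k => a k * cos (θ k) :=
  ha.abs.of_norm_bounded fun k => by
    rw [norm_mul, Real.norm_eq_abs]
    exact mul_le_of_le_one_right (abs_nonneg _) (abs_cos_le_one _)

lemma abs_tsum_mul_cos_le (ha : ∀ k, 0 ≤ a k) (hs : Summable a) (θ : ℕ → ℝ) :
    |∑' k, a k * cos (θ k)| ≤ ∑' k, a k := by
  refine (norm_tsum_le_tsum_norm (summable_mul_cos hs θ).norm).trans ?_
  refine (summable_mul_cos hs θ).norm.tsum_le_tsum (fun k => ?_) hs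
  rw [norm_mul, Real.norm_eq_abs, abs_of_nonneg (ha k)]
  exact mul_le_of_le_one_right (ha k) (abs_cos_le_one _)

lemma tsum_sub_mul_tsum_natCast_mul_le_tsum_mul_cos (ha : ∀ k, 0 ≤ a k) (hs : Summable a)
    (hks : Summable fun k : ℕ => (k : ℝ) * a k) {u δ : ℝ} (hu : |u| ≤ δ) :
    ∑' k, a k - δ * ∑' k : ℕ, (k : ℝ) * a k ≤ ∑' k : ℕ, a k * cos (k * u) := by
  have hterm (k : ℕ) : a k - δ * ((k : ℝ) * a k) ≤ a k * cos (k * u) := by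
    have hku : |(k : ℝ) * u| ≤ k * δ := by
      rw [abs_mul, Nat.abs_cast]
      exact mul_le_mul_of_nonneg_left hu k.cast_nonneg
    nlinarith [one_sub_abs_le_cos ((k : ℝ) * u), ha k]
  rw [← tsum_mul_left, ← hs.tsum_sub (hks.mul_left δ)]
  exact (hs.sub (hks.mul_left δ)).tsum_le_tsum hterm (summable_mul_cos hs _)

end CosineSeries

section Kernel

variable {ψ : ℕ → ℝ} {n : ℕ}

lemma summable_comp_add_of_summable_natCast_mul (hψ : ∀ k, 0 ≤ ψ k)
    (hsum : Summable fun k : ℕ => (k : ℝ) * ψ k) (hn : 1 ≤ n) : Summable fun k => ψ (k + n) := by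
  refine ((summable_nat_add_iff n).mpr hsum).of_nonneg_of_le (fun _ => hψ _) fun k => ?_
  have : (1 : ℝ) ≤ ((k + n : ℕ) : ℝ) := by exact_mod_cast (show 1 ≤ k + n by omega)
  nlinarith [hψ (k + n)]

lemma summable_natCast_mul_comp_add (hψ : ∀ k, 0 ≤ ψ k)
    (hsum : Summable fun k : ℕ => (k : ℝ) * ψ k) :
    Summable fun k : ℕ => (k : ℝ) * ψ (k + n) :=
  ((summable_nat_add_iff n).mpr hsum).of_nonneg_of_le
    (fun k => mul_nonneg k.cast_nonneg (hψ _)) fun _ => mul_le_mul_of_nonneg_right (by simp) (hψ _)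

lemma abs_PsiKerN_le (hψ : ∀ k, 0 ≤ ψ k) (hs : Summable fun k => ψ (k + n)) (β t : ℝ) :
    |PsiKerN ψ β n t| ≤ ∑' k, ψ (k + n) :=
  abs_tsum_mul_cos_le (fun _ => hψ _) hs _

lemma PsiKerN_eq_tsum_mul_cos_add {β t φ : ℝ} {r : ℤ}
    (ht : n * t - β * π / 2 = φ + r * (2 * π)) :
    PsiKerN ψ β n t = ∑' k : ℕ, ψ (k + n) * cos (k * t + φ) := by
  refine tsum_congr fun k => ?_
  have : ((k + n : ℕ) : ℝ) * t - β * π / 2 = (k * t + φ) + r * (2 * π) := by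
    push_cast; linarith
  rw [this, cos_add_int_mul_two_pi]

end Kernel

theorem PsiKerN_inf_norm_bounds (ψ : ℕ → ℝ) (hψ : ∀ k, 0 ≤ ψ k)
    (hsum : Summable (fun k : ℕ => (k : ℝ) * ψ k)) (β : ℝ) (n : ℕ) (hn : 1 ≤ n) :
    (∑' k : ℕ, ψ (k + n)) - (π / (n : ℝ)) * (∑' k : ℕ, ((k : ℝ) + 1) * ψ (k + 1 + n)) ≤
        (⨅ lam : ℝ, ⨆ t : ℝ, |PsiKerN ψ β n t - lam|) ∧
      (⨅ lam : ℝ, ⨆ t : ℝ, |PsiKerN ψ β n t - lam|) ≤ ∑' k : ℕ, ψ (k + n) := by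
  have hs := summable_comp_add_of_summable_natCast_mul hψ hsum hn
  have hks := summable_natCast_mul_comp_add (n := n) hψ hsum
  have hbound := abs_PsiKerN_le hψ hs β
  refine ⟨?_, ciInf_ciSup_abs_sub_le_of_abs_le hbound⟩
  have hshift : ∑' k : ℕ, ((k : ℝ) + 1) * ψ (k + 1 + n) = ∑' k : ℕ, (k : ℝ) * ψ (k + n) := by
    rw [hks.tsum_eq_zero_add]; push_cast; simp
  have hN : (0 : ℝ) < n := by exact_mod_cast hn
  obtain ⟨t₀, r₀, ht₀, hnt₀⟩ := exists_abs_le_pi_div_mul_eq_add_int_mul_two_pi hN (β * π / 2)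
  obtain ⟨t₁, r₁, ht₁, hnt₁⟩ := exists_abs_le_pi_div_mul_eq_add_int_mul_two_pi hN (β * π / 2 + π)
  have hΨ₀ : PsiKerN ψ β n t₀ = ∑' k : ℕ, ψ (k + n) * cos (k * t₀) := by
    simpa using PsiKerN_eq_tsum_mul_cos_add (φ := 0) (r := r₀) (by linarith)
  have hΨ₁ : PsiKerN ψ β n t₁ = -∑' k : ℕ, ψ (k + n) * cos (k * t₁) := by
    rw [PsiKerN_eq_tsum_mul_cos_add (φ := π) (r := r₁) (by linarith), ← tsum_neg]
    simp only [cos_add_pi, mul_neg]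
  have hlow₀ := tsum_sub_mul_tsum_natCast_mul_le_tsum_mul_cos (fun _ => hψ _) hs hks ht₀
  have hlow₁ := tsum_sub_mul_tsum_natCast_mul_le_tsum_mul_cos (fun _ => hψ _) hs hks ht₁
  have hgap := sub_div_two_le_ciInf_ciSup_abs_sub hbound t₀ t₁
  rw [hshift]
  linarith
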